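/- Let k((Γ)) be endowed with a series derivation of Hardy type d, Γ a subgroup of the Hahn group Σ_{φ∈Φ} ℝ, θ_φ := v(d(t_φ)/t_φ), and θ̃ := l.u.b.{θ_φ : φ ∈ Φ}. Let α ∈ Γ with α ≠ θ̃, written α = α₀1_{φ₀} + ⋯ . Then there exists a uniquely determined ψ_α ∈ Φ such that α − θ_{ψ_α} = γ₀1_{ψ_α} + ⋯ for some γ₀ ≠ 0; and writing d(t_{ψ_α})/t_{ψ_α} = c_{ψ_α} t^{θ_{ψ_α}} + ⋯ (leading coefficient c_{ψ_α}), every series a = a_α t^α + ⋯ with v(a) = α admits the monomial (a_α/(γ₀ c_{ψ_α})) t^{α − θ_{ψ_α}} as an asymptotic integral. -/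

import Mathlib

/- Common setting: a generalized series field `k((Γ))`, where the totally ordered abelian
group `Γ` is regarded, via Hahn's embedding theorem, as a subgroup of the Hahn group
`Σ_{φ ∈ Φ} ℝ = HahnSeries Φ ℝ`, and the coefficient field `k` contains the real exponents
(via a ring homomorphism `ι : ℝ →+* k`). -/

open HahnSeries

noncomputable section

/-- Archimedean equivalence on an ordered abelian group. -/
def ArchEquiv {Γ : Type*} [AddCommGroup Γ] [LinearOrder Γ] [IsOrderedAddMonoid Γ] (x y : Γ) : Prop :=
  ∃ n : ℕ, |x| ≤ n • |y| ∧ |y| ≤ n • |x|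

/-- Lexicographic positivity of a (generalized) Hahn series: the leading coefficient is
positive. -/
def LexPos {Φ : Type*} [LinearOrder Φ] {R : Type*} [Zero R] [PartialOrder R]
    (x : HahnSeries Φ R) : Prop :=
  ∃ φ, 0 < x.coeff φ ∧ ∀ ψ, ψ < φ → x.coeff ψ = 0

/-- Lexicographic order relation. -/
def LexLe {Φ : Type*} [LinearOrder Φ] {R : Type*} [AddCommGroup R] [PartialOrder R]
    (x y : HahnSeries Φ R) : Prop :=
  x = y ∨ LexPos (y - x)

/-- The data of Hahn's embedding theorem: `Γ` is (identified with) a subgroup of the Hahn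
group `Σ_{φ ∈ Φ} ℝ` ordered lexicographically, containing the characteristic functions
`1_φ = single φ 1`.  The natural valuation of `γ ∈ Γ` is `(e γ).orderTop`. -/
structure HahnEmbeddingData (Φ : Type*) [LinearOrder Φ]
    (Γ : Type*) [AddCommGroup Γ] [LinearOrder Γ] [IsOrderedAddMonoid Γ] where
  e : Γ →+ HahnSeries Φ ℝ
  inj : Function.Injective e
  ord : ∀ γ : Γ, 0 < γ ↔ LexPos (e γ)
  b : Φ → Γ
  hb : ∀ φ, e (b φ) = HahnSeries.single φ 1

variable {Φ : Type*} [LinearOrder Φ] {Γ : Type*} [AddCommGroup Γ] [LinearOrder Γ] [IsOrderedAddMonoid Γ]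
  {k : Type*} [Field k]

/-- The fundamental monomial `t_φ = t^{1_φ}` in `k((Γ))`. -/
def tmon (H : HahnEmbeddingData Φ Γ) (k : Type*) [Field k] (φ : Φ) : HahnSeries Γ k :=
  HahnSeries.single (H.b φ) 1

/-- The logarithmic derivative `d(t_φ)/t_φ` of the fundamental monomial `t_φ`. -/
def logDer (H : HahnEmbeddingData Φ Γ) (D : HahnSeries Γ k → HahnSeries Γ k) (φ : Φ) :
    HahnSeries Γ k :=
  D (tmon H k φ) * (tmon H k φ)⁻¹

/-- A series derivation on `k((Γ))`: a derivation which is strongly linear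
(`d(Σ a_α t^α) = Σ a_α d(t^α)`, the family being summable) and satisfies the strong
Leibniz rule (`d(t^α) = t^α Σ_φ α_φ d(t_φ)/t_φ`, the family being summable). -/
structure IsSeriesDerivation (H : HahnEmbeddingData Φ Γ) (ι : ℝ →+* k)
    (D : HahnSeries Γ k → HahnSeries Γ k) : Prop where
  map_add : ∀ x y, D (x + y) = D x + D y
  leibniz : ∀ x y, D (x * y) = D x * y + x * D y
  strong_linear : ∀ x : HahnSeries Γ k, ∃ s : SummableFamily Γ k Γ,
    (∀ γ, s γ = x.coeff γ • D (HahnSeries.single γ 1)) ∧ D x = s.hsum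
  strong_leibniz : ∀ γ : Γ, ∃ s : SummableFamily Γ k Φ,
    (∀ φ, s φ = ι ((H.e γ).coeff φ) • (HahnSeries.single γ 1 * logDer H D φ)) ∧
    D (HahnSeries.single γ 1) = s.hsum

/-- (HD1): the valuation ring is `ker d + m_v`. -/
def HDone (D : HahnSeries Γ k → HahnSeries Γ k) : Prop :=
  {x : HahnSeries Γ k | 0 ≤ x.orderTop} =
    {x : HahnSeries Γ k | ∃ c m, D c = 0 ∧ 0 < HahnSeries.orderTop m ∧ x = c + m}

/-- (HD2): l'Hospital's rule. -/
def HDtwo (D : HahnSeries Γ k → HahnSeries Γ k) : Prop :=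
  ∀ a b : HahnSeries Γ k, a ≠ 0 → b ≠ 0 → a.order ≠ 0 → b.order ≠ 0 →
    (a.orderTop ≤ b.orderTop ↔ (D a).orderTop ≤ (D b).orderTop)

/-- (HD3): compatibility of the logarithmic derivative with the valuation. -/
def HDthree (D : HahnSeries Γ k → HahnSeries Γ k) : Prop :=
  ∀ a b : HahnSeries Γ k, a ≠ 0 → b ≠ 0 → |b.order| < |a.order| → 0 < |b.order| →
    (D a * a⁻¹).orderTop ≤ (D b * b⁻¹).orderTop ∧
      ((D a * a⁻¹).orderTop = (D b * b⁻¹).orderTop ↔ ArchEquiv a.order b.order)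

/-- A series derivation of Hardy type on `k((Γ))`. -/
def IsHardySeriesDerivation (H : HahnEmbeddingData Φ Γ) (ι : ℝ →+* k)
    (D : HahnSeries Γ k → HahnSeries Γ k) : Prop :=
  IsSeriesDerivation H ι D ∧ HDone D ∧ HDtwo D ∧ HDthree D

end

/-! HD3 applied to the fundamental monomials makes `φ ↦ θ_φ` strictly increasing, so by the
strong Leibniz rule `d(t^γ)` has leading term `γ₀ c_μ t^{γ + θ_μ}`, where `μ = v_Γ(γ)` and `γ₀` is
the coefficient of `1_μ` in `γ`. Comparing `t^{1_ψ}` with `t^{θ_ψ - θ_φ}` by l'Hospital's rule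
gives `v_Γ(θ_ψ - θ_φ) > φ` whenever `φ < ψ`. This makes `ψ_α` unique, and turns any `φ` with
`v_Γ(α - θ_φ) ≤ φ` into `ψ_α = v_Γ(α - θ_φ)`; if there is no such `φ`, then `α` is the least
upper bound of the `θ_φ`. Finally the monomial of the statement is chosen so that its derivative
has the leading term of `a`. -/

namespace HahnSeries

variable {Γ R : Type*} [LinearOrder Γ]

theorem orderTop_eq_of_forall_lt [Zero R] {x : HahnSeries Γ R} {g : Γ} (hg : x.coeff g ≠ 0)
    (hlt : ∀ j < g, x.coeff j = 0) : x.orderTop = g :=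
  le_antisymm (orderTop_le_of_coeff_ne_zero hg)
    (le_orderTop_iff_forall.2 fun j hj => hlt j (WithTop.coe_lt_coe.1 hj))

theorem leadingCoeff_eq_coeff_of_orderTop_eq [Zero R] {x : HahnSeries Γ R} {g : Γ}
    (h : x.orderTop = g) : x.leadingCoeff = x.coeff g := by
  have hx : x ≠ 0 := orderTop_ne_top.1 (by simp [h])
  rw [leadingCoeff_of_ne_zero hx]
  congr
  simp [h]

theorem lexPos_iff_leadingCoeff_pos [Zero R] [LinearOrder R] {x : HahnSeries Γ R} :
    LexPos x ↔ 0 < x.leadingCoeff := by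
  rw [← ofLex_toLex x, leadingCoeff_pos_iff, lt_iff]
  simp only [ofLex_toLex, ofLex_zero, coeff_zero, LexPos]
  exact exists_congr fun φ => ⟨fun h => ⟨fun ψ hψ => (h.2 ψ hψ).symm, h.1⟩,
    fun h => ⟨h.2, fun ψ hψ => (h.1 ψ hψ).symm⟩⟩

end HahnSeries

namespace HahnEmbeddingData

variable {Φ : Type*} [LinearOrder Φ] {Γ : Type*} [AddCommGroup Γ] [LinearOrder Γ]
  [IsOrderedAddMonoid Γ] (H : HahnEmbeddingData Φ Γ)

theorem exists_orderTop_eq {γ : Γ} (hγ : γ ≠ 0) : ∃ w : Φ, (H.e γ).orderTop = w :=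
  WithTop.ne_top_iff_exists.1 (orderTop_ne_top.2 ((map_ne_zero_iff _ H.inj).2 hγ)) |>.imp
    fun _ h => h.symm

theorem orderTop_sub_comm (γ δ : Γ) : (H.e (γ - δ)).orderTop = (H.e (δ - γ)).orderTop := by
  rw [← neg_sub, map_neg, orderTop_neg]

theorem orderTop_b (φ : Φ) : (H.e (H.b φ)).orderTop = φ := by
  rw [H.hb, orderTop_single one_ne_zero]

theorem pos_iff {γ : Γ} : 0 < γ ↔ 0 < (H.e γ).leadingCoeff :=
  (H.ord γ).trans lexPos_iff_leadingCoeff_pos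

theorem pos_add_of_orderTop_lt {γ δ : Γ} (hγ : 0 < γ)
    (h : (H.e γ).orderTop < (H.e δ).orderTop) : 0 < γ + δ := by
  rw [H.pos_iff, map_add, leadingCoeff_add_eq_left h]
  exact H.pos_iff.1 hγ

theorem b_pos (φ : Φ) : 0 < H.b φ := by
  rw [H.pos_iff, H.hb, leadingCoeff_of_single]
  exact one_pos

theorem nsmul_b_lt_b (n : ℕ) {φ ψ : Φ} (h : φ < ψ) : n • H.b ψ < H.b φ := by
  have hlt : (H.e (H.b φ)).orderTop < (H.e (-(n • H.b ψ))).orderTop := by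
    rw [map_neg, orderTop_neg, map_nsmul, H.orderTop_b]
    exact (WithTop.coe_lt_coe.2 h).trans_le (H.orderTop_b ψ ▸ orderTop_le_orderTop_smul n _)
  simpa [← sub_eq_add_neg] using H.pos_add_of_orderTop_lt (H.b_pos φ) hlt

theorem not_archEquiv_b {φ ψ : Φ} (h : φ < ψ) : ¬ ArchEquiv (H.b φ) (H.b ψ) := by
  rintro ⟨n, hle, -⟩
  rw [abs_of_pos (H.b_pos φ), abs_of_pos (H.b_pos ψ)] at hle
  exact (H.nsmul_b_lt_b n h).not_ge hle

end HahnEmbeddingData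

section SeriesDerivation

variable {Φ : Type*} [LinearOrder Φ] {Γ : Type*} [AddCommGroup Γ] [LinearOrder Γ]
  [IsOrderedAddMonoid Γ] {k : Type*} [Field k] {H : HahnEmbeddingData Φ Γ} {ι : ℝ →+* k}
  {D : HahnSeries Γ k → HahnSeries Γ k} {θ : Φ → Γ}

theorem order_tmon (φ : Φ) : (tmon H k φ).order = H.b φ :=
  order_single one_ne_zero

theorem theta_strictMono (h3 : HDthree D)
    (hθ : ∀ φ, (logDer H D φ).orderTop = ((θ φ : Γ) : WithTop Γ)) : StrictMono θ := by
  intro φ ψ h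
  have hb : |(tmon H k ψ).order| < |(tmon H k φ).order| := by
    rw [order_tmon, order_tmon, abs_of_pos (H.b_pos φ), abs_of_pos (H.b_pos ψ)]
    simpa using H.nsmul_b_lt_b 1 h
  obtain ⟨hle, heq_iff⟩ := h3 (tmon H k φ) (tmon H k ψ) (single_ne_zero one_ne_zero)
    (single_ne_zero one_ne_zero) hb (by rw [order_tmon]; exact abs_pos.2 (H.b_pos ψ).ne')
  change (logDer H D φ).orderTop ≤ (logDer H D ψ).orderTop at hle
  rw [hθ, hθ, WithTop.coe_le_coe] at hle
  refine hle.lt_of_ne fun heq => H.not_archEquiv_b h ?_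
  rw [← order_tmon (k := k), ← order_tmon (k := k)]
  exact heq_iff.1 (by change (logDer H D φ).orderTop = (logDer H D ψ).orderTop; rw [hθ, hθ, heq])

theorem IsSeriesDerivation.coeff_map_single (hd : IsSeriesDerivation H ι D) (γ : Γ) (c : k)
    (g : Γ) : (D (single γ c)).coeff g =
      c * ∑ᶠ φ, ι ((H.e γ).coeff φ) * (logDer H D φ).coeff (g - γ) := by
  obtain ⟨s, hs, hDs⟩ := hd.strong_linear (single γ c)
  obtain ⟨t, ht, hDt⟩ := hd.strong_leibniz γ
  rw [hDs, SummableFamily.coeff_hsum, finsum_eq_single _ γ fun δ hδ => by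
    rw [hs, coeff_single_of_ne hδ, zero_smul, coeff_zero], hs, coeff_single_same, coeff_smul,
    hDt, SummableFamily.coeff_hsum, smul_eq_mul]
  congr 1
  refine finsum_congr fun φ => ?_
  rw [ht, coeff_smul, smul_eq_mul, ← sub_add_cancel g γ, coeff_single_mul_add, one_mul,
    add_sub_cancel_right]

theorem IsSeriesDerivation.coeff_map_single_of_lt (hd : IsSeriesDerivation H ι D)
    (hθ : ∀ φ, (logDer H D φ).orderTop = ((θ φ : Γ) : WithTop Γ)) (hmono : Monotone θ)
    {γ : Γ} {μ : Φ} (hμ : (H.e γ).orderTop = μ) (c : k) {g : Γ} (hg : g < γ + θ μ) :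
    (D (single γ c)).coeff g = 0 := by
  rw [hd.coeff_map_single, finsum_eq_zero_of_forall_eq_zero, mul_zero]
  intro φ
  by_cases hφ : (H.e γ).coeff φ = 0
  · rw [hφ, map_zero, zero_mul]
  have hμφ : μ ≤ φ := WithTop.coe_le_coe.1 (hμ ▸ orderTop_le_of_coeff_ne_zero hφ)
  have hlt : g - γ < θ φ := (sub_lt_iff_lt_add'.2 hg).trans_le (hmono hμφ)
  rw [coeff_eq_zero_of_lt_orderTop (x := logDer H D φ) (by rw [hθ]; exact_mod_cast hlt),
    mul_zero]

theorem IsSeriesDerivation.coeff_map_single_add_theta (hd : IsSeriesDerivation H ι D)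
    (hθ : ∀ φ, (logDer H D φ).orderTop = ((θ φ : Γ) : WithTop Γ)) (hmono : StrictMono θ)
    {γ : Γ} {μ : Φ} (hμ : (H.e γ).orderTop = μ) (c : k) :
    (D (single γ c)).coeff (γ + θ μ) =
      c * (ι ((H.e γ).coeff μ) * (logDer H D μ).leadingCoeff) := by
  rw [hd.coeff_map_single, add_sub_cancel_left, leadingCoeff_eq_coeff_of_orderTop_eq (hθ μ)]
  congr 1
  refine finsum_eq_single _ μ fun φ hφ => ?_
  by_cases hφ' : (H.e γ).coeff φ = 0
  · rw [hφ', map_zero, zero_mul]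
  have hμφ : μ < φ :=
    (WithTop.coe_le_coe.1 (hμ ▸ orderTop_le_of_coeff_ne_zero hφ')).lt_of_ne (Ne.symm hφ)
  rw [coeff_eq_zero_of_lt_orderTop (x := logDer H D φ) (by rw [hθ]; exact_mod_cast hmono hμφ),
    mul_zero]

theorem leadingCoeff_mul_logDer_ne_zero
    (hθ : ∀ φ, (logDer H D φ).orderTop = ((θ φ : Γ) : WithTop Γ))
    {γ : Γ} {μ : Φ} (hμ : (H.e γ).orderTop = μ) :
    ι ((H.e γ).coeff μ) * (logDer H D μ).leadingCoeff ≠ 0 :=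
  mul_ne_zero ((map_ne_zero ι).2 (coeff_orderTop_ne hμ))
    (leadingCoeff_ne_zero.2 (orderTop_ne_top.1 (by simp [hθ])))

theorem IsSeriesDerivation.orderTop_map_single (hd : IsSeriesDerivation H ι D)
    (hθ : ∀ φ, (logDer H D φ).orderTop = ((θ φ : Γ) : WithTop Γ)) (hmono : StrictMono θ)
    {γ : Γ} {μ : Φ} (hμ : (H.e γ).orderTop = μ) {c : k} (hc : c ≠ 0) :
    (D (single γ c)).orderTop = ↑(γ + θ μ) :=
  orderTop_eq_of_forall_lt
    (by rw [hd.coeff_map_single_add_theta hθ hmono hμ]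
        exact mul_ne_zero hc (leadingCoeff_mul_logDer_ne_zero hθ hμ))
    fun _ hg => hd.coeff_map_single_of_lt hθ hmono.monotone hμ c hg

theorem IsSeriesDerivation.leadingCoeff_map_single (hd : IsSeriesDerivation H ι D)
    (hθ : ∀ φ, (logDer H D φ).orderTop = ((θ φ : Γ) : WithTop Γ)) (hmono : StrictMono θ)
    {γ : Γ} {μ : Φ} (hμ : (H.e γ).orderTop = μ) {c : k} (hc : c ≠ 0) :
    (D (single γ c)).leadingCoeff = c * (ι ((H.e γ).coeff μ) * (logDer H D μ).leadingCoeff) := by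
  rw [leadingCoeff_eq_coeff_of_orderTop_eq (hd.orderTop_map_single hθ hmono hμ hc),
    hd.coeff_map_single_add_theta hθ hmono hμ]


theorem add_theta_le_add_theta (hd : IsSeriesDerivation H ι D) (h2 : HDtwo D)
    (hθ : ∀ φ, (logDer H D φ).orderTop = ((θ φ : Γ) : WithTop Γ)) (hmono : StrictMono θ)
    {γ δ : Γ} (hγ : γ ≠ 0) (hδ : δ ≠ 0) {μ ν : Φ}
    (hμ : (H.e γ).orderTop = μ) (hν : (H.e δ).orderTop = ν) (h : γ ≤ δ) :
    γ + θ μ ≤ δ + θ ν := by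
  have := (h2 (single γ (1 : k)) (single δ 1) (single_ne_zero one_ne_zero)
    (single_ne_zero one_ne_zero) (by rwa [order_single one_ne_zero])
    (by rwa [order_single one_ne_zero])).1
  rw [orderTop_single one_ne_zero, orderTop_single one_ne_zero,
    hd.orderTop_map_single hθ hmono hμ one_ne_zero,
    hd.orderTop_map_single hθ hmono hν one_ne_zero] at this
  exact_mod_cast this (by exact_mod_cast h)

theorem lt_orderTop_theta_sub (hd : IsSeriesDerivation H ι D) (h2 : HDtwo D)
    (hθ : ∀ φ, (logDer H D φ).orderTop = ((θ φ : Γ) : WithTop Γ)) (hmono : StrictMono θ)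
    {φ ψ : Φ} (h : φ < ψ) : (φ : WithTop Φ) < (H.e (θ ψ - θ φ)).orderTop := by
  have hpos : 0 < θ ψ - θ φ := sub_pos.2 (hmono h)
  obtain ⟨χ, hχ⟩ := H.exists_orderTop_eq hpos.ne'
  by_contra! hle
  have hχφ : χ ≤ φ := WithTop.coe_le_coe.1 (hχ ▸ hle)
  have hb_lt : H.b ψ < θ ψ - θ φ := by
    have hlt : (H.e (θ ψ - θ φ)).orderTop < (H.e (-H.b ψ)).orderTop := by
      rw [map_neg, orderTop_neg, H.orderTop_b, hχ]
      exact_mod_cast hχφ.trans_lt h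
    simpa [← sub_eq_add_neg] using H.pos_add_of_orderTop_lt hpos hlt
  -- l'Hospital's rule applied to `t^{1_ψ}` and `t^{θ_ψ - θ_φ}` forces `1_ψ ≤ 0`.
  have hle_θ : H.b ψ + θ ψ ≤ θ ψ :=
    calc H.b ψ + θ ψ
        ≤ (θ ψ - θ φ) + θ χ := add_theta_le_add_theta hd h2 hθ hmono (H.b_pos ψ).ne'
          hpos.ne' (H.orderTop_b ψ) hχ hb_lt.le
      _ ≤ (θ ψ - θ φ) + θ φ := by gcongr; exact hmono.monotone hχφ
      _ = θ ψ := sub_add_cancel _ _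
  exact (H.b_pos ψ).not_ge (by simpa using hle_θ)

theorem isLUB_range_of_forall_lt_orderTop (hmono : StrictMono θ) {α : Γ}
    (h : ∀ φ : Φ, (φ : WithTop Φ) < (H.e (α - θ φ)).orderTop) : IsLUB (Set.range θ) α := by
  constructor
  · rintro _ ⟨φ, rfl⟩
    by_contra! hlt
    have hpos : 0 < θ φ - α := sub_pos.2 hlt
    obtain ⟨w, hw⟩ := H.exists_orderTop_eq hpos.ne'
    have hφw : φ < w := by
      have := h φ
      rwa [H.orderTop_sub_comm, hw, WithTop.coe_lt_coe] at this
    have := H.pos_add_of_orderTop_lt (δ := α - θ w) hpos (by rw [hw]; exact h w)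
    exact (hmono hφw).not_gt (by simpa using this)
  · intro u hu
    by_contra! hlt
    have hpos : 0 < α - u := sub_pos.2 hlt
    obtain ⟨w, hw⟩ := H.exists_orderTop_eq hpos.ne'
    have := H.pos_add_of_orderTop_lt (δ := θ w - α) hpos
      (by rw [hw, H.orderTop_sub_comm]; exact h w)
    exact (hu ⟨w, rfl⟩).not_gt (by simpa using this)

theorem exists_orderTop_sub_theta_eq (hd : IsSeriesDerivation H ι D) (h2 : HDtwo D)
    (hθ : ∀ φ, (logDer H D φ).orderTop = ((θ φ : Γ) : WithTop Γ)) (hmono : StrictMono θ)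
    {α : Γ} (hα : ¬ IsLUB (Set.range θ) α) : ∃ ψ, (H.e (α - θ ψ)).orderTop = ψ := by
  obtain ⟨φ, hφ⟩ : ∃ φ, (H.e (α - θ φ)).orderTop ≤ φ := by
    by_contra! h
    exact hα (isLUB_range_of_forall_lt_orderTop hmono h)
  obtain ⟨χ, hχ⟩ := H.exists_orderTop_eq (show α - θ φ ≠ 0 from fun h0 => by simp [h0] at hφ)
  have hχφ : χ ≤ φ := WithTop.coe_le_coe.1 (hχ ▸ hφ)
  refine ⟨χ, hχφ.eq_or_lt.elim (fun h => h ▸ hχ) fun hlt => ?_⟩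
  rw [← sub_add_sub_cancel α (θ φ) (θ χ), map_add,
    orderTop_add_eq_left (hχ ▸ lt_orderTop_theta_sub hd h2 hθ hmono hlt), hχ]

theorem eq_of_orderTop_sub_theta_eq (hd : IsSeriesDerivation H ι D) (h2 : HDtwo D)
    (hθ : ∀ φ, (logDer H D φ).orderTop = ((θ φ : Γ) : WithTop Γ)) (hmono : StrictMono θ)
    {α : Γ} {φ ψ : Φ} (hφ : (H.e (α - θ φ)).orderTop = φ) (hψ : (H.e (α - θ ψ)).orderTop = ψ) :
    φ = ψ := by
  wlog h : φ < ψ generalizing φ ψ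
  · exact (not_lt.1 h).eq_or_lt.elim Eq.symm fun h' => (this hψ hφ h').symm
  have hsub : (H.e (θ ψ - θ φ)).orderTop = φ := by
    rw [← sub_sub_sub_cancel_left (θ φ) (θ ψ) α, map_sub,
      orderTop_sub (by rw [hφ, hψ]; exact_mod_cast h), hφ]
  exact absurd hsub (lt_orderTop_theta_sub hd h2 hθ hmono h).ne'

theorem lt_orderTop_map_single_sub (hd : IsSeriesDerivation H ι D)
    (hθ : ∀ φ, (logDer H D φ).orderTop = ((θ φ : Γ) : WithTop Γ)) (hmono : StrictMono θ)
    {α : Γ} {ψ : Φ} (hψ : (H.e (α - θ ψ)).orderTop = ψ) {a : HahnSeries Γ k} (ha : a ≠ 0)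
    (hα : a.order = α) :
    a.orderTop < (D (single (α - θ ψ) (a.leadingCoeff /
      (ι ((H.e (α - θ ψ)).coeff ψ) * (logDer H D ψ).leadingCoeff))) - a).orderTop := by
  have hc := leadingCoeff_mul_logDer_ne_zero (ι := ι) hθ hψ
  have hx : a.leadingCoeff / (ι ((H.e (α - θ ψ)).coeff ψ) * (logDer H D ψ).leadingCoeff) ≠ 0 :=
    div_ne_zero (leadingCoeff_ne_zero.2 ha) hc
  have haα : a.orderTop = α := by rw [← hα, order_eq_orderTop_of_ne_zero ha]
  rw [haα]
  refine le_orderTop_of_leadingCoeff_eq ?_ haα ?_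
  · rw [hd.orderTop_map_single hθ hmono hψ hx, sub_add_cancel]
  · rw [hd.leadingCoeff_map_single hθ hmono hψ hx, div_mul_cancel₀ _ hc]

end SeriesDerivation

/-- monomial asymptotic integration.  Let `θ_φ = v(d(t_φ)/t_φ)` and let
`α ∈ Γ` differ from `θ̃ = l.u.b.{θ_φ}`.  Then there is a unique `ψ_α ∈ Φ` with
`v_Γ(α − θ_{ψ_α}) = ψ_α`, and every series `a` with `v(a) = α` and leading coefficient
`a_α` admits the monomial `(a_α/(γ₀ c_{ψ_α})) t^{α − θ_{ψ_α}}` as an asymptotic integral,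
where `γ₀` is the coefficient of `1_{ψ_α}` in `α − θ_{ψ_α}` and `c_{ψ_α}` is the leading
coefficient of `d(t_{ψ_α})/t_{ψ_α}`. -/
theorem monomial_asymptotic_integral {Φ : Type*} [LinearOrder Φ]
    {Γ : Type*} [AddCommGroup Γ] [LinearOrder Γ] [IsOrderedAddMonoid Γ] {k : Type*} [Field k]
    (H : HahnEmbeddingData Φ Γ) (ι : ℝ →+* k)
    (D : HahnSeries Γ k → HahnSeries Γ k) (hD : IsHardySeriesDerivation H ι D)
    (θ : Φ → Γ) (hθ : ∀ φ, (logDer H D φ).orderTop = ((θ φ : Γ) : WithTop Γ))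
    (α : Γ) (hα : ¬ IsLUB (Set.range θ) α) :
    (∃! ψ : Φ, (H.e (α - θ ψ)).orderTop = ((ψ : Φ) : WithTop Φ)) ∧
    (∀ ψ : Φ, (H.e (α - θ ψ)).orderTop = ((ψ : Φ) : WithTop Φ) →
      ∀ a : HahnSeries Γ k, a ≠ 0 → a.order = α →
        ∃ m : HahnSeries Γ k,
          m = HahnSeries.single (α - θ ψ)
                (a.leadingCoeff /
                  (ι ((H.e (α - θ ψ)).coeff ψ) * (logDer H D ψ).leadingCoeff)) ∧
          m ≠ 0 ∧ a.orderTop < (D m - a).orderTop) := by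
  obtain ⟨hd, -, h2, h3⟩ := hD
  have hmono := theta_strictMono h3 hθ
  obtain ⟨ψ, hψ⟩ := exists_orderTop_sub_theta_eq hd h2 hθ hmono hα
  refine ⟨⟨ψ, hψ, fun φ hφ => eq_of_orderTop_sub_theta_eq hd h2 hθ hmono hφ hψ⟩, ?_⟩
  intro ψ hψ a ha hα
  refine ⟨_, rfl, single_ne_zero (div_ne_zero (leadingCoeff_ne_zero.2 ha)
    (leadingCoeff_mul_logDer_ne_zero (ι := ι) hθ hψ)),
    lt_orderTop_map_single_sub hd hθ hmono hψ ha hα⟩
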